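/- Let γ > 1. The function m_a(ξ) = e^{a^{1/γ}|ξ|₁ − (1/2)a|ξ|^γ} on ℝ² satisfies: there is a constant C depending only on γ such that |m_a(ξ)| ≤ C for all a ≥ 0 and ξ ∈ ℝ², and for each fixed a > 0, m_a(ξ) → 0 exponentially fast as |ξ| → ∞. -/

import Mathlib

/-!
With `r = |ξ|` one has `|ξ|₁ ≤ 2r`, and the substitution `t = a^{1/γ} r` turns the exponent
`2 a^{1/γ} r - a r^γ / 2` into `2t - t^γ / 2`, whose supremum over `t ≥ 0` depends only on `γ`.
For fixed `a > 0`, the exponent plus `r` is at most `K r - (a/2) r^γ` with `K = 2a^{1/γ} + 1`, again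
bounded above because `γ > 1`.
-/

open Real

/-- For `r ≥ (K/A)^{1/(γ-1)}` the power term dominates, and below that point `K r` is at most
its value at the threshold. -/
lemma mul_sub_mul_rpow_le {γ K A r : ℝ} (hγ : 1 < γ) (hK : 0 ≤ K) (hA : 0 < A) (hr : 0 ≤ r) :
    K * r - A * r ^ γ ≤ K * (K / A) ^ (1 / (γ - 1)) := by
  set R := (K / A) ^ (1 / (γ - 1))
  have hKA : 0 ≤ K / A := div_nonneg hK hA.le
  have hArγ : 0 ≤ A * r ^ γ := mul_nonneg hA.le (rpow_nonneg hr γ)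
  rcases le_total r R with h | h
  · nlinarith [mul_le_mul_of_nonneg_left h hK]
  · rcases hr.eq_or_lt with rfl | hr
    · rw [mul_zero, zero_rpow (by linarith), mul_zero, sub_zero]
      exact mul_nonneg hK (rpow_nonneg hKA _)
    have hRpow : R ^ (γ - 1) = K / A := by
      rw [← rpow_mul hKA, one_div, inv_mul_cancel₀ (by linarith), rpow_one]
    have hKA_le : K / A ≤ r ^ (γ - 1) :=
      hRpow ▸ rpow_le_rpow (rpow_nonneg hKA _) h (by linarith)
    have hKr : K * r ≤ A * r ^ γ :=
      calc K * r = A * (K / A * r) := by field_simp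
        _ ≤ A * (r ^ (γ - 1) * r) := by gcongr
        _ = A * r ^ γ := by rw [← rpow_add_one hr.ne', sub_add_cancel]
    nlinarith [mul_nonneg hK (rpow_nonneg hKA (1 / (γ - 1)))]

lemma abs_add_abs_le_two_mul_sqrt (x y : ℝ) : |x| + |y| ≤ 2 * √(x ^ 2 + y ^ 2) := by
  have hx : |x| ≤ √(x ^ 2 + y ^ 2) := abs_le_sqrt (by nlinarith [sq_nonneg y])
  have hy : |y| ≤ √(x ^ 2 + y ^ 2) := abs_le_sqrt (by nlinarith [sq_nonneg x])
  linarith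

lemma mul_rpow_eq_rpow_one_div_mul_rpow {γ a r : ℝ} (hγ : γ ≠ 0) (ha : 0 ≤ a) (hr : 0 ≤ r) :
    a * r ^ γ = (a ^ (1 / γ) * r) ^ γ := by
  rw [mul_rpow (rpow_nonneg ha _) hr, one_div, rpow_inv_rpow ha hγ]

lemma rpow_one_div_mul_sub_mul_rpow_le {γ a r : ℝ} (hγ : 1 < γ) (ha : 0 ≤ a) (hr : 0 ≤ r) :
    2 * a ^ (1 / γ) * r - 1 / 2 * a * r ^ γ ≤ 2 * 4 ^ (1 / (γ - 1)) := by
  have ht : 0 ≤ a ^ (1 / γ) * r := mul_nonneg (rpow_nonneg ha _) hr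
  have hscale := mul_rpow_eq_rpow_one_div_mul_rpow (by linarith : γ ≠ 0) ha hr
  have hbound := mul_sub_mul_rpow_le hγ zero_le_two one_half_pos ht
  rw [show (2 : ℝ) / (1 / 2) = 4 by norm_num] at hbound
  calc 2 * a ^ (1 / γ) * r - 1 / 2 * a * r ^ γ
      = 2 * (a ^ (1 / γ) * r) - 1 / 2 * (a ^ (1 / γ) * r) ^ γ := by rw [← hscale]; ring
    _ ≤ 2 * 4 ^ (1 / (γ - 1)) := hbound

theorem gevrey_multiplier_symbol_bounds (γ : ℝ) (hγ : 1 < γ) :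
    (∃ C : ℝ, 0 < C ∧ ∀ a : ℝ, 0 ≤ a → ∀ ξ : ℝ × ℝ,
        |Real.exp (a ^ (1/γ) * (|ξ.1| + |ξ.2|)
          - (1/2) * a * (Real.sqrt (ξ.1 ^ 2 + ξ.2 ^ 2)) ^ γ)| ≤ C) ∧
    (∀ a : ℝ, 0 < a → ∃ c : ℝ, 0 < c ∧ ∃ C' : ℝ, 0 < C' ∧ ∀ ξ : ℝ × ℝ,
        Real.exp (a ^ (1/γ) * (|ξ.1| + |ξ.2|)
          - (1/2) * a * (Real.sqrt (ξ.1 ^ 2 + ξ.2 ^ 2)) ^ γ)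
          ≤ C' * Real.exp (-c * Real.sqrt (ξ.1 ^ 2 + ξ.2 ^ 2))) := by
  constructor
  · refine ⟨exp (2 * 4 ^ (1 / (γ - 1))), exp_pos _, fun a ha ξ => ?_⟩
    rw [abs_exp, exp_le_exp]
    have hnorm := abs_add_abs_le_two_mul_sqrt ξ.1 ξ.2
    have hexp := rpow_one_div_mul_sub_mul_rpow_le hγ ha (sqrt_nonneg (ξ.1 ^ 2 + ξ.2 ^ 2))
    nlinarith [rpow_nonneg ha (1 / γ)]
  · intro a ha
    set K := 2 * a ^ (1 / γ) + 1
    have hK : 0 ≤ K := by positivity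
    refine ⟨1, one_pos, exp (K * (K / (a / 2)) ^ (1 / (γ - 1))), exp_pos _, fun ξ => ?_⟩
    rw [← exp_add, exp_le_exp]
    have hnorm := abs_add_abs_le_two_mul_sqrt ξ.1 ξ.2
    have hbound := mul_sub_mul_rpow_le hγ hK (half_pos ha) (sqrt_nonneg (ξ.1 ^ 2 + ξ.2 ^ 2))
    nlinarith [rpow_nonneg ha.le (1 / γ)]
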